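/- The Cayley map is a homomorphism for multiplication: for guarded formal power series r₁, r₂ over a finite semiring S, cay(r₁·r₂)_{w,v} = Σ_{u ∈ Gs} cay(r₁)_{w,u} · cay(r₂)_{u,v}, where the sum exists because only finitely many summands are nonzero (equivalently, because S is finite and additively idempotent the sum of the finitely many distinct values exists). -/

import Mathlib

/-- A guarded string `G₁a₁G₂…a_{k-1}G_k`: a list of atoms interleaved with a list of
letters, with one more atom than letters. -/
structure GuardedString (A B : Type*) where
  atoms : List A
  letters : List B
  len : atoms.length = letters.length + 1

namespace GuardedString

variable {A B : Type*}

theorem atoms_ne_nil (σ : GuardedString A B) : σ.atoms ≠ [] := by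
  intro h
  have hlen := σ.len
  rw [h] at hlen
  simp at hlen

/-- The head (first atom) of a guarded string. -/
def hd (σ : GuardedString A B) : A := σ.atoms.head σ.atoms_ne_nil

/-- The tail (last atom) of a guarded string. -/
def tl (σ : GuardedString A B) : A := σ.atoms.getLast σ.atoms_ne_nil

/-- The fusion product: defined when `tl σ = hd τ`, joining the two strings and
identifying the shared atom; undefined (`none`) otherwise. -/
def fuse [DecidableEq A] (σ τ : GuardedString A B) : Option (GuardedString A B) :=
  if σ.tl = τ.hd then
    some ⟨σ.atoms ++ τ.atoms.tail, σ.letters ++ τ.letters, by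
      simp [List.length_append, List.length_tail, σ.len, τ.len]; omega⟩
  else none

/-- The guarded string consisting of a single atom. -/
def ofAtom (G : A) : GuardedString A B := ⟨[G], [], by simp⟩

end GuardedString

open Classical in
/-- The Cayley matrix of a guarded formal power series: `cay r w v = r u` if
`v = w ⋄ u` for the (necessarily unique) guarded string `u`, and `0` otherwise. -/
noncomputable def cay {A B S : Type*} [DecidableEq A] [Semiring S]
    (r : GuardedString A B → S) :
    GuardedString A B → GuardedString A B → S := fun w v =>
  if h : ∃ u : GuardedString A B, w.fuse u = some v then r h.choose else 0

namespace GuardedString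

/-- The prefix of a guarded string consisting of the first `i` letters (and `i+1` atoms). -/
def takeGS {A B : Type*} (w : GuardedString A B) (i : ℕ) : GuardedString A B :=
  ⟨w.atoms.take (i + 1), w.letters.take i, by simp [w.len] <;> omega⟩

/-- The suffix of a guarded string obtained by dropping the first `i` letters. -/
def dropGS {A B : Type*} (w : GuardedString A B) (i : ℕ) : GuardedString A B :=
  ⟨w.atoms.drop (min i w.letters.length), w.letters.drop i, by simp [w.len]; omega⟩

end GuardedString

/-- The Cauchy product of guarded formal power series:
`(r₁·r₂)(w) = Σ {r₁(u)·r₂(v) : w = u ⋄ v}`, realized by summing over all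
factorizations of `w` (one for each split position of its letters). -/
def gmul {A B S : Type*} [Semiring S] (r₁ r₂ : GuardedString A B → S) :
    GuardedString A B → S := fun w =>
  ∑ i ∈ Finset.range (w.letters.length + 1), r₁ (w.takeGS i) * r₂ (w.dropGS i)

/-!
A factorization `v = w ⋄ u' ⋄ v'` is determined by the intermediate string `u = w ⋄ u'`, which
is a prefix of `v` extending `w`. So if `v = w ⋄ x`, the nonzero terms of the matrix product
are indexed by the split positions `j` of `x`, and the term at `j` is
`r₁ (x.takeGS j) * r₂ (x.dropGS j)`, the `j`-th summand of `(r₁·r₂)(x)`. If `v` does not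
extend `w`, no intermediate `u` exists and both sides vanish.
-/

namespace GuardedString

variable {A B : Type*}

@[ext]
theorem ext {σ τ : GuardedString A B} (h₁ : σ.atoms = τ.atoms) (h₂ : σ.letters = τ.letters) :
    σ = τ := by
  cases σ; cases τ; simp_all

theorem some_hd (σ : GuardedString A B) : (some σ.hd : Option A) = σ.atoms[0]? := by
  rw [hd, ← List.head?_eq_some_head σ.atoms_ne_nil, List.head?_eq_getElem?]

theorem some_tl (σ : GuardedString A B) :
    (some σ.tl : Option A) = σ.atoms[σ.letters.length]? := by
  rw [tl, ← List.getLast?_eq_some_getLast σ.atoms_ne_nil, List.getLast?_eq_getElem?,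
    σ.len, Nat.add_sub_cancel]

theorem atoms_drop_length_letters (σ : GuardedString A B) :
    σ.atoms.drop σ.letters.length = [σ.tl] := by
  simpa [σ.len, tl] using List.drop_length_sub_one σ.atoms_ne_nil

theorem length_letters_takeGS (v : GuardedString A B) (i : ℕ) :
    (v.takeGS i).letters.length = min i v.letters.length :=
  List.length_take

theorem atoms_dropGS {v : GuardedString A B} {i : ℕ} (hi : i ≤ v.letters.length) :
    (v.dropGS i).atoms = v.atoms.drop i :=
  congrArg v.atoms.drop (Nat.min_eq_left hi)

theorem takeGS_takeGS (v : GuardedString A B) {m i : ℕ} (h : m ≤ i) :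
    (v.takeGS i).takeGS m = v.takeGS m := by
  apply ext
  · exact (List.take_take ..).trans (congrArg v.atoms.take (Nat.min_eq_left (by omega)))
  · exact (List.take_take ..).trans (congrArg v.letters.take (Nat.min_eq_left h))

theorem dropGS_dropGS (v : GuardedString A B) {m i : ℕ} (h : m + i ≤ v.letters.length) :
    (v.dropGS m).dropGS i = v.dropGS (m + i) := by
  have hl : (v.dropGS m).letters.length = v.letters.length - m := List.length_drop
  apply ext
  · rw [atoms_dropGS (by omega), atoms_dropGS (by omega), atoms_dropGS h, List.drop_drop]
  · exact List.drop_drop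

variable [DecidableEq A]

theorem fuse_eq_some_iff {σ τ v : GuardedString A B} :
    σ.fuse τ = some v ↔
      σ.tl = τ.hd ∧ v.atoms = σ.atoms ++ τ.atoms.tail ∧ v.letters = σ.letters ++ τ.letters := by
  unfold fuse
  split_ifs with h
  · constructor
    · rintro ⟨⟩
      exact ⟨h, rfl, rfl⟩
    · rintro ⟨-, h₁, h₂⟩
      exact congrArg some (ext h₁.symm h₂.symm)
  · simp [h]

section OfFuseEqSome

variable {σ τ v : GuardedString A B} (h : σ.fuse τ = some v)
include h

theorem length_letters_of_fuse_eq_some :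
    v.letters.length = σ.letters.length + τ.letters.length := by
  rw [(fuse_eq_some_iff.mp h).2.2, List.length_append]

theorem takeGS_eq_of_fuse_eq_some : v.takeGS σ.letters.length = σ := by
  obtain ⟨-, ha, hl⟩ := fuse_eq_some_iff.mp h
  apply ext
  · exact (congrArg (List.take _) ha).trans (σ.len ▸ List.take_left)
  · exact (congrArg (List.take _) hl).trans List.take_left

theorem dropGS_eq_of_fuse_eq_some : v.dropGS σ.letters.length = τ := by
  obtain ⟨htl, ha, hl⟩ := fuse_eq_some_iff.mp h
  have hle : σ.letters.length ≤ v.letters.length := by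
    rw [length_letters_of_fuse_eq_some h]; omega
  apply ext
  · rw [atoms_dropGS hle, ha, List.drop_append, atoms_drop_length_letters, σ.len,
      Nat.sub_eq_zero_of_le (Nat.le_succ _), List.drop_zero, htl, List.singleton_append, hd,
      List.cons_head_tail τ.atoms_ne_nil]
  · exact (congrArg (List.drop _) hl).trans List.drop_left

end OfFuseEqSome

theorem takeGS_fuse_dropGS (v : GuardedString A B) {j : ℕ} (hj : j ≤ v.letters.length) :
    (v.takeGS j).fuse (v.dropGS j) = some v := by
  rw [fuse_eq_some_iff]
  refine ⟨?_, ?_, (List.take_append_drop j v.letters).symm⟩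
  · apply Option.some.inj
    rw [some_tl, some_hd, atoms_dropGS hj]
    show (v.atoms.take (j + 1))[(v.letters.take j).length]? = (v.atoms.drop j)[0]?
    simp [Nat.min_eq_left hj]
  · show v.atoms = v.atoms.take (j + 1) ++ (v.dropGS j).atoms.tail
    rw [atoms_dropGS hj, List.tail_drop, List.take_append_drop]

theorem takeGS_fuse_takeGS_dropGS (v : GuardedString A B) {m i : ℕ}
    (h : m + i ≤ v.letters.length) :
    (v.takeGS m).fuse ((v.dropGS m).takeGS i) = some (v.takeGS (m + i)) := by
  have hda := atoms_dropGS (v := v) (i := m) (by omega)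
  rw [fuse_eq_some_iff]
  refine ⟨?_, ?_, List.take_add⟩
  · apply Option.some.inj
    rw [some_tl, some_hd]
    show (v.atoms.take (m + 1))[(v.letters.take m).length]?
        = ((v.dropGS m).atoms.take (i + 1))[0]?
    rw [hda]
    simp [Nat.min_eq_left (show m ≤ v.letters.length by omega)]
  · show v.atoms.take (m + i + 1) = v.atoms.take (m + 1) ++ ((v.dropGS m).atoms.take (i + 1)).tail
    rw [hda, ← List.drop_one, List.drop_take, List.drop_drop, Nat.add_sub_cancel,
      Nat.add_right_comm, List.take_add]

section SplitOfFuseEqSome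

variable {w x v : GuardedString A B} (hx : w.fuse x = some v) {j : ℕ} (hj : j ≤ x.letters.length)
include hx hj

theorem fuse_takeGS_of_fuse_eq_some :
    w.fuse (x.takeGS j) = some (v.takeGS (w.letters.length + j)) := by
  have h := takeGS_fuse_takeGS_dropGS v (m := w.letters.length) (i := j)
    (by rw [length_letters_of_fuse_eq_some hx]; omega)
  rwa [takeGS_eq_of_fuse_eq_some hx, dropGS_eq_of_fuse_eq_some hx] at h

theorem takeGS_fuse_dropGS_of_fuse_eq_some :
    (v.takeGS (w.letters.length + j)).fuse (x.dropGS j) = some v := by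
  have hle : w.letters.length + j ≤ v.letters.length := by
    rw [length_letters_of_fuse_eq_some hx]; omega
  rw [← dropGS_eq_of_fuse_eq_some hx, dropGS_dropGS v hle]
  exact takeGS_fuse_dropGS v hle

end SplitOfFuseEqSome

theorem exists_fuse_of_fuse_of_fuse {w u u' v v' : GuardedString A B}
    (hu : w.fuse u' = some u) (hv : u.fuse v' = some v) : ∃ x, w.fuse x = some v := by
  have hwu : w.letters.length ≤ u.letters.length := by
    rw [length_letters_of_fuse_eq_some hu]; omega
  have huv : u.letters.length ≤ v.letters.length := by
    rw [length_letters_of_fuse_eq_some hv]; omega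
  have hw : v.takeGS w.letters.length = w := by
    rw [← takeGS_takeGS v hwu, takeGS_eq_of_fuse_eq_some hv, takeGS_eq_of_fuse_eq_some hu]
  have h := takeGS_fuse_dropGS v (hwu.trans huv)
  rw [hw] at h
  exact ⟨_, h⟩

end GuardedString

open GuardedString

section Cayley

variable {A B S : Type*} [DecidableEq A] [Semiring S] {r : GuardedString A B → S}

theorem cay_of_fuse_eq_some {w u v : GuardedString A B} (h : w.fuse u = some v) :
    cay r w v = r u := by
  have hex : ∃ u, w.fuse u = some v := ⟨u, h⟩
  rw [cay, dif_pos hex, ← dropGS_eq_of_fuse_eq_some hex.choose_spec,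
    dropGS_eq_of_fuse_eq_some h]

theorem exists_fuse_of_cay_ne_zero {w v : GuardedString A B} (h : cay r w v ≠ 0) :
    ∃ u, w.fuse u = some v := by
  by_contra hex
  exact h (by rw [cay, dif_neg hex])

variable {r₁ r₂ : GuardedString A B → S} {w v : GuardedString A B}

theorem cay_mul_cay_eq_zero (hv : ¬ ∃ x, w.fuse x = some v) (u : GuardedString A B) :
    cay r₁ w u * cay r₂ u v = 0 := by
  by_contra hne
  obtain ⟨u', hu⟩ := exists_fuse_of_cay_ne_zero (left_ne_zero_of_mul hne)
  obtain ⟨v', hv'⟩ := exists_fuse_of_cay_ne_zero (right_ne_zero_of_mul hne)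
  exact hv (exists_fuse_of_fuse_of_fuse hu hv')

variable {x : GuardedString A B} (hx : w.fuse x = some v)
include hx

theorem support_cay_mul_cay_subset :
    Function.support (fun u => cay r₁ w u * cay r₂ u v) ⊆
      (fun j => v.takeGS (w.letters.length + j)) '' ↑(Finset.range (x.letters.length + 1)) := by
  intro u hne
  obtain ⟨u', hu⟩ := exists_fuse_of_cay_ne_zero (left_ne_zero_of_mul hne)
  obtain ⟨v', hv⟩ := exists_fuse_of_cay_ne_zero (right_ne_zero_of_mul hne)
  have hlu := length_letters_of_fuse_eq_some hu
  have hlv := length_letters_of_fuse_eq_some hv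
  have hlx := length_letters_of_fuse_eq_some hx
  refine ⟨u'.letters.length, by simp only [Finset.coe_range, Set.mem_Iio]; omega, ?_⟩
  change v.takeGS (w.letters.length + u'.letters.length) = u
  rw [← hlu, takeGS_eq_of_fuse_eq_some hv]

theorem injOn_takeGS_add :
    Set.InjOn (fun j => v.takeGS (w.letters.length + j)) ↑(Finset.range (x.letters.length + 1)) := by
  intro i hi j hj hij
  have hlx := length_letters_of_fuse_eq_some hx
  have hlen := congrArg (fun σ : GuardedString A B => σ.letters.length) hij
  simp only [length_letters_takeGS] at hlen
  simp only [Finset.coe_range, Set.mem_Iio] at hi hj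
  omega

theorem cay_mul_cay_takeGS_add {j : ℕ} (hj : j ≤ x.letters.length) :
    cay r₁ w (v.takeGS (w.letters.length + j)) * cay r₂ (v.takeGS (w.letters.length + j)) v =
      r₁ (x.takeGS j) * r₂ (x.dropGS j) := by
  rw [cay_of_fuse_eq_some (fuse_takeGS_of_fuse_eq_some hx hj),
    cay_of_fuse_eq_some (takeGS_fuse_dropGS_of_fuse_eq_some hx hj)]

end Cayley

theorem stmt18_general {A B S : Type*} [DecidableEq A] [Semiring S]
    (r₁ r₂ : GuardedString A B → S) (w v : GuardedString A B) :
    {u : GuardedString A B | cay r₁ w u * cay r₂ u v ≠ 0}.Finite ∧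
    cay (gmul r₁ r₂) w v = ∑ᶠ u : GuardedString A B, cay r₁ w u * cay r₂ u v := by
  classical
  by_cases hv : ∃ x, w.fuse x = some v
  · obtain ⟨x, hx⟩ := hv
    have hsupp := support_cay_mul_cay_subset (r₁ := r₁) (r₂ := r₂) hx
    rw [← Finset.coe_image] at hsupp
    refine ⟨(Finset.finite_toSet _).subset hsupp, ?_⟩
    rw [finsum_eq_finsetSum_of_support_subset _ hsupp, Finset.sum_image (injOn_takeGS_add hx),
      cay_of_fuse_eq_some hx, gmul]
    exact Finset.sum_congr rfl fun j hj =>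
      (cay_mul_cay_takeGS_add hx (Nat.lt_succ_iff.mp (Finset.mem_range.mp hj))).symm
  · simp only [cay_mul_cay_eq_zero hv, ne_eq, not_true_eq_false, Set.ofPred_false,
      Set.finite_empty, finsum_zero, true_and]
    rw [cay, dif_neg hv]

/-- The Cayley map is a homomorphism for multiplication:
`cay(r₁·r₂)_{w,v} = Σ_{u ∈ Gs} cay(r₁)_{w,u} · cay(r₂)_{u,v}`, where the sum exists
because only finitely many summands are nonzero. -/
theorem stmt18 {A B S : Type*} [DecidableEq A] [Semiring S] [Fintype S]
    (hid : ∀ x : S, x + x = x)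
    (r₁ r₂ : GuardedString A B → S) (w v : GuardedString A B) :
    {u : GuardedString A B | cay r₁ w u * cay r₂ u v ≠ 0}.Finite ∧
    cay (gmul r₁ r₂) w v = ∑ᶠ u : GuardedString A B, cay r₁ w u * cay r₂ u v :=
  stmt18_general r₁ r₂ w v
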